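/- Let K : bD × bD → ℂ be continuous with ∫_{bD} K(w,z) dσ(w) = 1 for all z, and for small t let K_t(w,z) be kernels with ∫ K_t(w,z) dσ(w) = 1 such that: (i) K_t → K uniformly on {(w,z) : δ(w,z) ≥ a} for each a > 0, and (ii) |K_t(w,z)| ≤ C δ(w,z)^{−2n} uniformly in t. If f satisfies the Hölder condition |f(w) − f(z)| ≤ c δ(w,z)^α (0 < α < 1) and F_t(z) = ∫ f(w) K_t(w,z) dσ(w), F(z) = ∫ f(w) K(w,z) dσ(w), then sup_{z∈bD} |F_t(z) − F(z)| → 0 as t → 0. -/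

import Mathlib

/-!
Subtracting `f z` is free because both kernels have integral one, so
`F_t(z) - F(z) = ∫ (f w - f z) (K_t(w,z) - K(w,z)) dσ(w)`. The Hölder factor turns the size
bound `δ^{-2n}` into `δ^{-2n+α}`, whose integral over `δ(·,z) ≤ r` is `O(r^α)` uniformly in `z`.
Away from the diagonal, on `r < δ ≤ M` the kernels converge uniformly and the Hölder factor is at
most `c₀ M^α`, while on `δ > M` the integrand is at most a multiple of `M^{-2n+α}`, which is small
for large `M` since `α < 2n`.
-/

open MeasureTheory Set Filter Topology

namespace Real

lemma exists_mem_Ioo_mul_rpow_lt {α : ℝ} (hα : 0 < α) (B : ℝ) {η : ℝ} (hη : 0 < η) :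
    ∃ r ∈ Ioo (0 : ℝ) 1, B * r ^ α < η := by
  have hlim : Tendsto (fun r : ℝ => B * r ^ α) (𝓝[>] 0) (𝓝 0) := by
    simpa [zero_rpow hα.ne'] using
      ((continuousAt_rpow_const 0 α (Or.inr hα.le)).tendsto.const_mul B).mono_left
        nhdsWithin_le_nhds
  exact (Eventually.and (Ioo_mem_nhdsGT zero_lt_one) (hlim.eventually (gt_mem_nhds hη))).exists

lemma exists_pos_mul_rpow_lt {e : ℝ} (he : e < 0) (B : ℝ) {η : ℝ} (hη : 0 < η) :
    ∃ M > 0, B * M ^ e < η := by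
  have hlim : Tendsto (fun M : ℝ => B * M ^ e) atTop (𝓝 0) := by
    simpa using (tendsto_rpow_neg_atTop (neg_pos.2 he)).const_mul B
  exact ((eventually_gt_atTop 0).and (hlim.eventually (gt_mem_nhds hη))).exists

end Real

lemma norm_mul_le_mul_rpow_add {R : Type*} [SeminormedRing R] {u v : R} {d a b c₁ c₂ : ℝ}
    (hd : 0 ≤ d) (ha : 0 < a) (hc₁ : 0 ≤ c₁) (hc₂ : 0 ≤ c₂)
    (hu : ‖u‖ ≤ c₁ * d ^ a) (hv : 0 < d → ‖v‖ ≤ c₂ * d ^ b) :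
    ‖u * v‖ ≤ c₁ * c₂ * d ^ (b + a) := by
  rcases hd.eq_or_lt with rfl | hd
  · rw [Real.zero_rpow ha.ne', mul_zero] at hu
    calc ‖u * v‖ ≤ ‖u‖ * ‖v‖ := norm_mul_le _ _
      _ ≤ 0 := by nlinarith [norm_nonneg v]
      _ ≤ _ := by positivity
  · calc ‖u * v‖ ≤ ‖u‖ * ‖v‖ := norm_mul_le _ _
      _ ≤ c₁ * d ^ a * (c₂ * d ^ b) := mul_le_mul hu (hv hd) (norm_nonneg _) (by positivity)
      _ = c₁ * c₂ * d ^ (b + a) := by rw [Real.rpow_add hd]; ring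

namespace MeasureTheory

variable {X : Type*} [MeasurableSpace X] {μ : Measure X}

section Normalized

variable {𝕜 : Type*} [RCLike 𝕜] {f K K₁ K₂ : X → 𝕜}

lemma integral_mul_eq_integral_sub_mul_add (a : 𝕜) (hK : Integrable K μ) (hK1 : ∫ w, K w ∂μ = 1)
    (hfK : Integrable (fun w => (f w - a) * K w) μ) :
    ∫ w, f w * K w ∂μ = ∫ w, (f w - a) * K w ∂μ + a := by
  calc ∫ w, f w * K w ∂μ = ∫ w, ((f w - a) * K w + a * K w) ∂μ := by congr 1; ext w; ring
    _ = ∫ w, (f w - a) * K w ∂μ + a := by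
      rw [integral_add hfK (hK.const_mul a), integral_const_mul, hK1, mul_one]

lemma integral_mul_sub_integral_mul (a : 𝕜) (hK₁ : Integrable K₁ μ) (hK₂ : Integrable K₂ μ)
    (h₁ : ∫ w, K₁ w ∂μ = 1) (h₂ : ∫ w, K₂ w ∂μ = 1)
    (hf₁ : Integrable (fun w => (f w - a) * K₁ w) μ)
    (hf₂ : Integrable (fun w => (f w - a) * K₂ w) μ) :
    ∫ w, f w * K₁ w ∂μ - ∫ w, f w * K₂ w ∂μ = ∫ w, (f w - a) * (K₁ w - K₂ w) ∂μ := by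
  rw [integral_mul_eq_integral_sub_mul_add a hK₁ h₁ hf₁,
    integral_mul_eq_integral_sub_mul_add a hK₂ h₂ hf₂]
  simp_rw [mul_sub]
  rw [integral_sub hf₁ hf₂]
  ring

end Normalized

section KernelBounds

variable {E : Type*} [NormedAddCommGroup E] {g : X → E} {d : X → ℝ} {r e A : ℝ}

lemma lintegral_norm_le_of_near_far {B : ℝ} (hA : 0 ≤ A)
    (hnear : ∀ w, d w ≤ r → ‖g w‖ ≤ A * d w ^ e) (hfar : ∀ w, r < d w → ‖g w‖ ≤ B) :
    ∫⁻ w, ENNReal.ofReal ‖g w‖ ∂μ ≤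
      ENNReal.ofReal A * ∫⁻ w in {w | d w ≤ r}, ENNReal.ofReal (d w ^ e) ∂μ +
        ENNReal.ofReal B * μ univ := by
  have hpt : ∀ w, ENNReal.ofReal ‖g w‖ ≤
      {w | d w ≤ r}.indicator (fun w => ENNReal.ofReal A * ENNReal.ofReal (d w ^ e)) w +
        ENNReal.ofReal B := by
    intro w
    by_cases hw : d w ≤ r
    · rw [indicator_of_mem (show w ∈ {w | d w ≤ r} from hw), ← ENNReal.ofReal_mul hA]
      exact (ENNReal.ofReal_le_ofReal (hnear w hw)).trans le_self_add
    · rw [indicator_of_notMem (show w ∉ {w | d w ≤ r} from hw), zero_add]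
      exact ENNReal.ofReal_le_ofReal (hfar w (not_le.1 hw))
  calc ∫⁻ w, ENNReal.ofReal ‖g w‖ ∂μ
      ≤ ∫⁻ w, ({w | d w ≤ r}.indicator
          (fun w => ENNReal.ofReal A * ENNReal.ofReal (d w ^ e)) w + ENNReal.ofReal B) ∂μ :=
        lintegral_mono hpt
    _ = ∫⁻ w, {w | d w ≤ r}.indicator
          (fun w => ENNReal.ofReal A * ENNReal.ofReal (d w ^ e)) w ∂μ +
          ENNReal.ofReal B * μ univ := by
        rw [lintegral_add_right _ measurable_const, lintegral_const]
    _ ≤ _ := by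
        gcongr
        refine (lintegral_indicator_le _ _).trans_eq ?_
        exact lintegral_const_mul' _ _ ENNReal.ofReal_ne_top

variable [IsFiniteMeasure μ]

lemma integrable_of_norm_le_mul_rpow (hm : AEStronglyMeasurable g μ) (hr : 0 < r) (he : e ≤ 0)
    (hA : 0 ≤ A) (hsing : ∫⁻ w in {w | d w ≤ r}, ENNReal.ofReal (d w ^ e) ∂μ ≠ ⊤)
    (hg : ∀ w, ‖g w‖ ≤ A * d w ^ e) : Integrable g μ := by
  refine ⟨hm, (hasFiniteIntegral_iff_norm g).2 ?_⟩
  have hfar : ∀ w, r < d w → ‖g w‖ ≤ A * r ^ e := fun w hw =>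
    (hg w).trans (mul_le_mul_of_nonneg_left (Real.rpow_le_rpow_of_nonpos hr hw.le he) hA)
  refine (lintegral_norm_le_of_near_far hA (fun w _ => hg w) hfar).trans_lt ?_
  exact ENNReal.add_lt_top.2 ⟨ENNReal.mul_lt_top ENNReal.ofReal_lt_top hsing.lt_top,
    ENNReal.mul_lt_top ENNReal.ofReal_lt_top (measure_lt_top μ _)⟩

lemma norm_integral_le_of_near_mid_far [NormedSpace ℝ E] {I η M : ℝ} (hA : 0 ≤ A) (hI : 0 ≤ I) (hη : 0 ≤ η)
    (hM : 0 < M) (he : e ≤ 0)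
    (hsing : ∫⁻ w in {w | d w ≤ r}, ENNReal.ofReal (d w ^ e) ∂μ ≤ ENNReal.ofReal I)
    (hg : ∀ w, ‖g w‖ ≤ A * d w ^ e) (hmid : ∀ w, r < d w → d w ≤ M → ‖g w‖ ≤ η) :
    ‖∫ w, g w ∂μ‖ ≤ A * I + (η + A * M ^ e) * μ.real univ := by
  have hfar : ∀ w, r < d w → ‖g w‖ ≤ η + A * M ^ e := by
    intro w hw
    rcases le_or_gt (d w) M with hwM | hwM
    · exact (hmid w hw hwM).trans (le_add_of_nonneg_right (by positivity))
    · refine (hg w).trans ((mul_le_mul_of_nonneg_left ?_ hA).trans (le_add_of_nonneg_left hη))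
      exact Real.rpow_le_rpow_of_nonpos hM hwM.le he
  have hB : 0 ≤ η + A * M ^ e := by positivity
  calc ‖∫ w, g w ∂μ‖ ≤ (∫⁻ w, ENNReal.ofReal ‖g w‖ ∂μ).toReal :=
        norm_integral_le_lintegral_norm _
    _ ≤ (ENNReal.ofReal A * ENNReal.ofReal I +
          ENNReal.ofReal (η + A * M ^ e) * μ univ).toReal := by
        refine ENNReal.toReal_mono (by finiteness) ?_
        exact (lintegral_norm_le_of_near_far hA (fun w _ => hg w) hfar).trans (by gcongr)
    _ = A * I + (η + A * M ^ e) * μ.real univ := by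
        rw [ENNReal.toReal_add (by finiteness) (by finiteness), ENNReal.toReal_mul,
          ENNReal.toReal_mul, ENNReal.toReal_ofReal hA, ENNReal.toReal_ofReal hI,
          ENNReal.toReal_ofReal hB, measureReal_def]

end KernelBounds

end MeasureTheory

/-- uniform convergence of the perturbed Cauchy-type integrals. If the
kernels `K_t` are normalized (`∫ K_t(·,z) dσ = 1`), converge to `K` uniformly off the
diagonal, and satisfy a uniform size bound `|K_t(w,z)| ≤ C δ(w,z)^{-2n}` on a space
with the borderline integrability property, then for Hölder `f` the integrals
`F_t(z) = ∫ f K_t(·,z) dσ` converge to `F(z) = ∫ f K(·,z) dσ` uniformly in `z`. -/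
theorem stmt15 {X : Type*} [MeasurableSpace X] (σ : Measure X) [IsFiniteMeasure σ]
    (n : ℕ) (hn : 1 ≤ n)
    (δ : X → X → ℝ) (hδ : ∀ w z, 0 ≤ δ w z)
    (c : ℝ → ℝ)
    (hint : ∀ (z : X) (r β : ℝ), 0 < r → r < 1 → 0 < β →
      ∫⁻ w in {w | δ w z ≤ r}, ENNReal.ofReal (δ w z ^ (-(2 * (n : ℝ)) + β)) ∂σ ≤
        ENNReal.ofReal (c β * r ^ β))
    (K : X → X → ℂ) (Kt : ℝ → X → X → ℂ)
    (hKnorm : ∀ z, ∫ w, K w z ∂σ = 1)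
    (hKtnorm : ∀ t z, ∫ w, Kt t w z ∂σ = 1)
    (hKint : ∀ z, Integrable (fun w => K w z) σ)
    (hKtint : ∀ t z, Integrable (fun w => Kt t w z) σ)
    -- (i) uniform convergence off the diagonal
    (hconv : ∀ a > (0 : ℝ), ∀ ε > (0 : ℝ), ∃ t₀ > (0 : ℝ), ∀ t : ℝ, |t| < t₀ →
      ∀ w z, a ≤ δ w z → ‖Kt t w z - K w z‖ ≤ ε)
    -- (ii) uniform size bounds
    (C : ℝ) (hC : 0 ≤ C)
    (hKtbd : ∀ t w z, 0 < δ w z →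
      ‖Kt t w z‖ ≤ C * δ w z ^ (-(2 * (n : ℝ))))
    (hKbd : ∀ w z, 0 < δ w z → ‖K w z‖ ≤ C * δ w z ^ (-(2 * (n : ℝ))))
    -- Hölder continuity of the data
    (f : X → ℂ) (α c₀ : ℝ) (hα : 0 < α) (hα1 : α < 1) (hc₀ : 0 ≤ c₀)
    (hf : ∀ w z, ‖f w - f z‖ ≤ c₀ * δ w z ^ α)
    (hfint : Integrable f σ)
    (Ft : ℝ → X → ℂ) (F : X → ℂ)
    (hFt : ∀ t z, Ft t z = ∫ w, f w * Kt t w z ∂σ)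
    (hF : ∀ z, F z = ∫ w, f w * K w z ∂σ) :
    ∀ ε > (0 : ℝ), ∃ t₀ > (0 : ℝ), ∀ t : ℝ, |t| < t₀ → ∀ z,
      ‖Ft t z - F z‖ ≤ ε := by
  have he : -(2 * (n : ℝ)) + α < 0 := by
    have : (1 : ℝ) ≤ n := by exact_mod_cast hn
    linarith
  have hKdiff : ∀ t w z, 0 < δ w z →
      ‖Kt t w z - K w z‖ ≤ 2 * C * δ w z ^ (-(2 * (n : ℝ))) := fun t w z h =>
    (norm_sub_le _ _).trans (by linarith [hKtbd t w z h, hKbd w z h])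
  have hint_sub : ∀ L : X → X → ℂ, (∀ z, Integrable (fun w => L w z) σ) →
      (∀ w z, 0 < δ w z → ‖L w z‖ ≤ C * δ w z ^ (-(2 * (n : ℝ)))) →
      ∀ z, Integrable (fun w => (f w - f z) * L w z) σ := fun L hL hLbd z =>
    integrable_of_norm_le_mul_rpow ((hfint.1.sub aestronglyMeasurable_const).mul (hL z).1)
      one_half_pos he.le (mul_nonneg hc₀ hC)
      ((hint z _ α one_half_pos (by norm_num) hα).trans_lt ENNReal.ofReal_lt_top).ne
      (fun w => norm_mul_le_mul_rpow_add (hδ w z) hα hc₀ hC (hf w z) (hLbd w z))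
  have hdiff : ∀ t z, Ft t z - F z = ∫ w, (f w - f z) * (Kt t w z - K w z) ∂σ := fun t z => by
    rw [hFt, hF]
    exact integral_mul_sub_integral_mul _ (hKtint t z) (hKint z) (hKtnorm t z) (hKnorm z)
      (hint_sub _ (hKtint t) (hKtbd t) z) (hint_sub K hKint hKbd z)
  intro ε hε
  have hε3 : 0 < ε / 3 := by positivity
  obtain ⟨M, hM, hMε⟩ := Real.exists_pos_mul_rpow_lt he (c₀ * (2 * C) * σ.real univ) hε3
  obtain ⟨r, ⟨hr, hr1⟩, hrε⟩ :=
    Real.exists_mem_Ioo_mul_rpow_lt hα (c₀ * (2 * C) * max (c α) 0) hε3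
  obtain ⟨η, hη, hηε⟩ := exists_pos_mul_lt hε3 (σ.real univ)
  obtain ⟨ε', hε', hε'η⟩ := exists_pos_mul_lt hη (c₀ * M ^ α)
  obtain ⟨t₀, ht₀, hKconv⟩ := hconv r hr ε' hε'
  refine ⟨t₀, ht₀, fun t ht z => ?_⟩
  have hmid : ∀ w, r < δ w z → δ w z ≤ M →
      ‖(f w - f z) * (Kt t w z - K w z)‖ ≤ η := fun w hrw hwM =>
    calc _ ≤ ‖f w - f z‖ * ‖Kt t w z - K w z‖ := norm_mul_le _ _
      _ ≤ c₀ * M ^ α * ε' :=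
        mul_le_mul ((hf w z).trans (by gcongr; exact hδ w z)) (hKconv t ht w z hrw.le)
          (norm_nonneg _) (by positivity)
      _ ≤ η := hε'η.le
  have hsing := (hint z r α hr hr1 hα).trans
    (ENNReal.ofReal_le_ofReal (mul_le_mul_of_nonneg_right (le_max_left _ (0 : ℝ)) (by positivity)))
  have hbound := norm_integral_le_of_near_mid_far (d := fun w => δ w z)
    (by positivity) (by positivity) hη.le hM he.le hsing
    (fun w => norm_mul_le_mul_rpow_add (hδ w z) hα hc₀ (by positivity) (hf w z)
      (hKdiff t w z)) hmid
  rw [hdiff]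
  linarith
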